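/- arXiv:1711.04745 — 3 statements merged into one kernel-verified Lean document; each statement's English description precedes it below -/
import Mathlib

section
/- Let $f\in C^1[0,\infty)$ with $f(s)>0$ for $s>0$, suppose $f$ is increasing on $[0,\infty)$, and suppose there exist $A_1>0$, $q>2$, $\nu\in(0,q-2)$ and $a>0$ with $f(s)\leq M_a s^{1+\nu}$ for all $s\in[0,a]$ for some $M_a>0$. Then there exists $C_a\geq 0$ such that $F(s+t)-F(s)-F(t)-f(s)t-f(t)s\geq -C_a (st)^{1+\nu/2}$ for all $s,t\in[0,a]$, where $F(s)=\int_0^s f$. -/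
open MeasureTheory

noncomputable section

theorem stmt_4 (f : ℝ → ℝ) (hf : ContinuousOn f (Set.Ici 0))
    (hpos : ∀ s : ℝ, 0 < s → 0 < f s) (hmono : MonotoneOn f (Set.Ici 0))
    (q ν a Mₐ : ℝ) (hq : 2 < q) (hν : ν ∈ Set.Ioo 0 (q - 2)) (ha : 0 < a) (hM : 0 < Mₐ)
    (hbound : ∀ s ∈ Set.Icc (0:ℝ) a, f s ≤ Mₐ * s ^ (1 + ν))
    (F : ℝ → ℝ) (hF : ∀ s, F s = ∫ t in (0:ℝ)..s, f t) :
    ∃ Cₐ ≥ (0:ℝ), ∀ s ∈ Set.Icc (0:ℝ) a, ∀ t ∈ Set.Icc (0:ℝ) a,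
      F (s + t) - F s - F t - f s * t - f t * s ≥ -Cₐ * (s * t) ^ (1 + ν / 2) := by
  obtain ⟨hν0, hν2⟩ := hν
  have hInt : ∀ b c : ℝ, 0 ≤ b → b ≤ c → IntervalIntegrable f volume b c := by
    intro b c hb hbc
    apply ContinuousOn.intervalIntegrable
    apply hf.mono
    rw [Set.uIcc_of_le hbc]
    intro x hx
    exact le_trans hb hx.1
  -- F(c) - F(b) ≥ f(b) * (c - b) for 0 ≤ b ≤ c
  have hlow : ∀ b c : ℝ, 0 ≤ b → b ≤ c → f b * (c - b) ≤ F c - F b := by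
    intro b c hb hbc
    have h1 : F c - F b = ∫ x in b..c, f x := by
      rw [hF, hF, ← intervalIntegral.integral_add_adjacent_intervals
        (hInt 0 b le_rfl hb) (hInt b c hb hbc)]
      ring
    rw [h1]
    have h2 : (∫ _ in b..c, f b) ≤ ∫ x in b..c, f x := by
      apply intervalIntegral.integral_mono_on hbc
        intervalIntegrable_const (hInt b c hb hbc)
      intro x hx
      exact hmono hb (le_trans hb hx.1) hx.1
    rw [intervalIntegral.integral_const, smul_eq_mul] at h2
    linarith [h2]
  -- F(s) ≤ s * f(s) for 0 ≤ s
  have hup : ∀ s : ℝ, 0 ≤ s → F s ≤ s * f s := by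
    intro s hs
    rw [hF]
    have h2 : (∫ x in (0:ℝ)..s, f x) ≤ ∫ _ in (0:ℝ)..s, f s := by
      apply intervalIntegral.integral_mono_on hs (hInt 0 s le_rfl hs)
        intervalIntegrable_const
      intro x hx
      exact hmono hx.1 hs hx.2
    rw [intervalIntegral.integral_const, smul_eq_mul, sub_zero] at h2
    exact h2
  refine ⟨2 * Mₐ, by positivity, ?_⟩
  -- key lemma for s ≤ t
  have key : ∀ s ∈ Set.Icc (0:ℝ) a, ∀ t ∈ Set.Icc (0:ℝ) a, s ≤ t →
      F (s + t) - F s - F t - f s * t - f t * s ≥ -(2 * Mₐ) * (s * t) ^ (1 + ν / 2) := by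
    intro s hs t ht hst
    have hs0 : (0:ℝ) ≤ s := hs.1
    have ht0 : (0:ℝ) ≤ t := ht.1
    have h1 : f t * s ≤ F (s + t) - F t := by
      have := hlow t (s + t) ht0 (by linarith)
      simpa using this
    have hfs : f s ≤ Mₐ * s ^ (1 + ν) := hbound s hs
    have hFs : F s ≤ Mₐ * s ^ (2 + ν) := by
      calc F s ≤ s * f s := hup s hs0
        _ ≤ s * (Mₐ * s ^ (1 + ν)) := by
            apply mul_le_mul_of_nonneg_left hfs hs0
        _ = Mₐ * s ^ (2 + ν) := by
            have h : s ^ ((2:ℝ) + ν) = s * s ^ (1 + ν) := by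
              rw [show (2:ℝ) + ν = 1 + (1 + ν) by ring,
                Real.rpow_add_of_nonneg hs0 zero_le_one (by positivity),
                Real.rpow_one]
            rw [h]; ring
    have hfst : f s * t ≤ Mₐ * (s ^ (1 + ν) * t) := by
      calc f s * t ≤ Mₐ * s ^ (1 + ν) * t :=
        mul_le_mul_of_nonneg_right hfs ht0
        _ = Mₐ * (s ^ (1 + ν) * t) := by ring
    have hmulr : (s * t) ^ (1 + ν / 2) = s ^ (1 + ν / 2) * t ^ (1 + ν / 2) :=
      Real.mul_rpow hs0 ht0
    have e1 : s ^ (2 + ν) ≤ (s * t) ^ (1 + ν / 2) := by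
      rw [hmulr, show (2:ℝ) + ν = (1 + ν / 2) + (1 + ν / 2) by ring,
        Real.rpow_add_of_nonneg hs0 (by positivity) (by positivity)]
      exact mul_le_mul_of_nonneg_left
        (Real.rpow_le_rpow hs0 hst (by positivity)) (Real.rpow_nonneg hs0 _)
    have e2 : s ^ (1 + ν) * t ≤ (s * t) ^ (1 + ν / 2) := by
      rw [hmulr]
      have : s ^ (1 + ν) = s ^ (1 + ν / 2) * s ^ (ν / 2) := by
        rw [← Real.rpow_add_of_nonneg hs0 (by positivity) (by positivity)]
        ring_nf
      rw [this]
      have ht1 : t ^ (1 + ν / 2) = t * t ^ (ν / 2) := by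
        rw [show (1:ℝ) + ν / 2 = 1 + ν / 2 from rfl,
          Real.rpow_add_of_nonneg ht0 zero_le_one (by positivity), Real.rpow_one]
      rw [ht1]
      have : s ^ (ν / 2) ≤ t ^ (ν / 2) := Real.rpow_le_rpow hs0 hst (by positivity)
      calc s ^ (1 + ν / 2) * s ^ (ν / 2) * t ≤ s ^ (1 + ν / 2) * t ^ (ν / 2) * t := by
            apply mul_le_mul_of_nonneg_right _ ht0
            exact mul_le_mul_of_nonneg_left this (Real.rpow_nonneg hs0 _)
        _ = s ^ (1 + ν / 2) * (t * t ^ (ν / 2)) := by ring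
    nlinarith [Real.rpow_nonneg (mul_nonneg hs0 ht0) (1 + ν / 2)]
  intro s hs t ht
  rcases le_total s t with h | h
  · exact key s hs t ht h
  · have := key t ht s hs h
    have e : s + t = t + s := by ring
    have e2 : s * t = t * s := by ring
    rw [e, e2]
    linarith [this]
end
end

section
/- Under assumptions $(V1)$, $(f1)$-$(f2)$: if $u$ is a critical point of $I_V$ (a solution of $-\Delta u+Vu=f(u)$ in $D^{1,2}(\mathbb{R}^N)$) with $I_V(u)\in[c_V,2c_V)$, then $u$ does not change sign, i.e., $u\geq 0$ a.e. or $u\leq 0$ a.e. -/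
open MeasureTheory

noncomputable section

/-- The critical Sobolev exponent `2* = 2N/(N-2)`. -/
def twoStar (N : ℕ) : ℝ := 2 * (N : ℝ) / ((N : ℝ) - 2)

/-- Membership in `D^{1,2}(ℝ^N)`: `u ∈ L^{2*}` with gradient in `L²`. -/
def D12 (N : ℕ) (u : EuclideanSpace ℝ (Fin N) → ℝ) : Prop :=
  MemLp u (ENNReal.ofReal (twoStar N)) volume ∧
    MemLp (fun x => ‖gradient u x‖) 2 volume

/-- The squared norm `‖u‖_V² = ∫ (|∇u|² + V u²)`. -/
def normVsq (N : ℕ) (V u : EuclideanSpace ℝ (Fin N) → ℝ) : ℝ :=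
  ∫ x, (‖gradient u x‖ ^ 2 + V x * u x ^ 2)

/-- The Nehari manifold associated to the potential `V` and nonlinearity `f`. -/
def NehariV (N : ℕ) (V : EuclideanSpace ℝ (Fin N) → ℝ) (f : ℝ → ℝ) :
    Set (EuclideanSpace ℝ (Fin N) → ℝ) :=
  {u | D12 N u ∧ ¬ (u =ᵐ[volume] (0 : EuclideanSpace ℝ (Fin N) → ℝ)) ∧
    normVsq N V u = ∫ x, f (u x) * u x}

/-- The energy functional `I_V(u) = ½‖u‖_V² − ∫ F(u)`. -/
def energyIV (N : ℕ) (V : EuclideanSpace ℝ (Fin N) → ℝ) (F : ℝ → ℝ)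
    (u : EuclideanSpace ℝ (Fin N) → ℝ) : ℝ :=
  normVsq N V u / 2 - ∫ x, F (u x)

/-! Test the equation of `u` against `u ⊔ 0` and `u ⊓ 0`: both lie in `D^{1,2}` and their
gradients are pointwise `0` or `∇u`, so each nonzero part lies on the Nehari manifold. There
`I_V(w) = ½ ∫ f(w) w - ∫ F(w)`, whose integrands split pointwise over the two parts, hence
`I_V(u) = I_V(u ⊔ 0) + I_V(u ⊓ 0) ≥ 2 c_V` if `u` changes sign. -/

open Filter Topology

section Gradient

variable {E : Type*} [NormedAddCommGroup E] [InnerProductSpace ℝ E] [CompleteSpace E]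

theorem measurable_gradient [MeasurableSpace E] [BorelSpace E] (g : E → ℝ) :
    Measurable (gradient g) :=
  (InnerProductSpace.toDual ℝ E).symm.continuous.measurable.comp (measurable_fderiv ℝ g)

/-- Where `g ≠ 0`, differentiability makes `g` agree with `u` near the point; where `g = 0`,
the sign condition makes the point an extremum of `g`. -/
theorem gradient_eq_zero_or_eq_of_eq_zero_or_eq {g u : E → ℝ}
    (hgu : ∀ y, g y = 0 ∨ g y = u y) (hsign : (∀ y, 0 ≤ g y) ∨ ∀ y, g y ≤ 0) (x : E) :
    gradient g x = 0 ∨ gradient g x = gradient u x := by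
  by_cases hd : DifferentiableAt ℝ g x
  swap
  · exact .inl (gradient_eq_zero_of_not_differentiableAt hd)
  by_cases hx : g x = 0
  · have hextr : IsLocalExtr g x := by
      rcases hsign with hsign | hsign
      · exact .inl (Eventually.of_forall fun y => hx ▸ hsign y)
      · exact .inr (Eventually.of_forall fun y => hx ▸ hsign y)
    left
    simp only [gradient, hextr.fderiv_eq_zero, map_zero]
  · have hlocal : g =ᶠ[𝓝 x] u := by
      filter_upwards [hd.continuousAt.eventually_ne hx] with y hy
      exact (hgu y).resolve_left hy
    exact .inr hlocal.gradient_eq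

theorem gradient_sup_zero (u : E → ℝ) (x : E) :
    gradient (u ⊔ 0) x = 0 ∨ gradient (u ⊔ 0) x = gradient u x :=
  gradient_eq_zero_or_eq_of_eq_zero_or_eq (fun y => (max_choice (u y) 0).symm)
    (.inl fun y => le_max_right (u y) 0) x

theorem gradient_inf_zero (u : E → ℝ) (x : E) :
    gradient (u ⊓ 0) x = 0 ∨ gradient (u ⊓ 0) x = gradient u x :=
  gradient_eq_zero_or_eq_of_eq_zero_or_eq (fun y => (min_choice (u y) 0).symm)
    (.inr fun y => min_le_right (u y) 0) x

end Gradient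

section Growth

variable {f : ℝ → ℝ} {A p : ℝ}

theorem abs_rpow_sub_one_mul_abs (hp : p ≠ 0) (s : ℝ) :
    |s| ^ (p - 1) * |s| = |s| ^ p := by
  rw [← Real.rpow_add_one' (abs_nonneg s) (by rwa [sub_add_cancel]), sub_add_cancel]

theorem abs_mul_self_le_of_abs_le_rpow (hp : p ≠ 0) (hf : ∀ s, |f s| ≤ A * |s| ^ (p - 1))
    (s : ℝ) : |f s * s| ≤ A * |s| ^ p := by
  rw [abs_mul, ← abs_rpow_sub_one_mul_abs hp, ← mul_assoc]
  exact mul_le_mul_of_nonneg_right (hf s) (abs_nonneg s)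

theorem abs_integral_le_of_abs_le_rpow (hp : 1 ≤ p) (hA : 0 ≤ A)
    (hf : ∀ s, |f s| ≤ A * |s| ^ (p - 1)) (s : ℝ) :
    |∫ t in (0 : ℝ)..s, f t| ≤ A * |s| ^ p := by
  have hbound : ∀ t ∈ Set.uIoc 0 s, ‖f t‖ ≤ A * |s| ^ (p - 1) := by
    intro t ht
    have hts : |t| ≤ |s| := by
      simpa using Set.abs_sub_left_of_mem_uIcc (Set.uIoc_subset_uIcc ht)
    exact (hf t).trans (by gcongr)
  calc |∫ t in (0 : ℝ)..s, f t| ≤ A * |s| ^ (p - 1) * |s - 0| :=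
        intervalIntegral.norm_integral_le_of_norm_le_const hbound
    _ = A * |s| ^ p := by
        rw [sub_zero, mul_assoc, abs_rpow_sub_one_mul_abs (by linarith)]

end Growth

section Integrability

variable {α : Type*} [MeasurableSpace α] {μ : Measure α} {φ : ℝ → ℝ} {A p : ℝ}

theorem MeasureTheory.MemLp.integrable_comp_of_abs_le_rpow (hφ : Continuous φ) (hp : 0 < p)
    (hφp : ∀ s, |φ s| ≤ A * |s| ^ p) {w : α → ℝ} (hw : MemLp w (ENNReal.ofReal p) μ) :
    Integrable (fun x => φ (w x)) μ := by
  have hint : Integrable (fun x => ‖w x‖ ^ p) μ := by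
    simpa [ENNReal.toReal_ofReal hp.le] using
      hw.integrable_norm_rpow (by simpa using hp) ENNReal.ofReal_ne_top
  exact (hint.const_mul A).mono' (hφ.comp_aestronglyMeasurable hw.1)
    (Eventually.of_forall fun x => hφp (w x))

theorem MeasureTheory.MemLp.integral_comp_eq_integral_sup_zero_add_integral_inf_zero
    (hφ : Continuous φ) (hp : 0 < p) (hφp : ∀ s, |φ s| ≤ A * |s| ^ p) {u : α → ℝ}
    (hu : MemLp u (ENNReal.ofReal p) μ) :
    ∫ x, φ (u x) ∂μ = (∫ x, φ ((u ⊔ 0) x) ∂μ) + ∫ x, φ ((u ⊓ 0) x) ∂μ := by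
  have hφ0 : φ 0 = 0 := by
    simpa [Real.zero_rpow hp.ne'] using hφp 0
  have hneg : MemLp (u ⊓ 0) (ENNReal.ofReal p) μ :=
    hu.of_le (hu.1.inf aestronglyMeasurable_const) (Eventually.of_forall fun x => by
      rcases le_total (u x) 0 with h | h <;> simp [h])
  have hpos : MemLp (u ⊔ 0) (ENNReal.ofReal p) μ := hu.pos_part
  rw [← integral_add (hpos.integrable_comp_of_abs_le_rpow hφ hp hφp)
    (hneg.integrable_comp_of_abs_le_rpow hφ hp hφp)]
  congr 1 with x
  rcases le_total (u x) 0 with h | h <;> simp [h, hφ0]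

end Integrability

theorem Real.sInf_le_of_pos {S : Set ℝ} (hS : 0 < sInf S) {a : ℝ} (ha : a ∈ S) :
    sInf S ≤ a := by
  refine csInf_le ?_ ha
  by_contra hbdd
  rw [Real.sInf_of_not_bddBelow hbdd] at hS
  exact hS.false

theorem one_lt_twoStar {N : ℕ} (hN : 3 ≤ N) : 1 < twoStar N := by
  have hN' : (3 : ℝ) ≤ N := by exact_mod_cast hN
  rw [twoStar, one_lt_div (by linarith)]
  linarith

theorem D12.of_abs_le {N : ℕ} {u g : EuclideanSpace ℝ (Fin N) → ℝ} (hu : D12 N u)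
    (hg : AEStronglyMeasurable g volume) (hgu : ∀ x, |g x| ≤ |u x|)
    (hgrad : ∀ x, ‖gradient g x‖ ≤ ‖gradient u x‖) : D12 N g :=
  ⟨hu.1.of_le hg (Eventually.of_forall hgu),
    hu.2.of_le (measurable_gradient g).norm.aestronglyMeasurable
      (Eventually.of_forall fun x => by simpa using hgrad x)⟩

theorem D12.sup_zero {N : ℕ} {u : EuclideanSpace ℝ (Fin N) → ℝ} (hu : D12 N u) :
    D12 N (u ⊔ 0) :=
  hu.of_abs_le (hu.1.1.sup aestronglyMeasurable_const)
    (fun x => by rcases le_total (u x) 0 with h | h <;> simp [h])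
    (fun x => by rcases gradient_sup_zero u x with h | h <;> simp [h])

theorem D12.inf_zero {N : ℕ} {u : EuclideanSpace ℝ (Fin N) → ℝ} (hu : D12 N u) :
    D12 N (u ⊓ 0) :=
  hu.of_abs_le (hu.1.1.inf aestronglyMeasurable_const)
    (fun x => by rcases le_total (u x) 0 with h | h <;> simp [h])
    (fun x => by rcases gradient_inf_zero u x with h | h <;> simp [h])

def IsWeakSolution (N : ℕ) (V : EuclideanSpace ℝ (Fin N) → ℝ) (f : ℝ → ℝ)
    (u : EuclideanSpace ℝ (Fin N) → ℝ) : Prop :=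
  ∀ v : EuclideanSpace ℝ (Fin N) → ℝ, D12 N v →
    (∫ x, ((inner ℝ (gradient u x) (gradient v x) : ℝ) + V x * u x * v x)) =
      ∫ x, f (u x) * v x

section Critical

variable {N : ℕ} {V u : EuclideanSpace ℝ (Fin N) → ℝ} {f : ℝ → ℝ}

theorem IsWeakSolution.normVsq_eq_integral {g : EuclideanSpace ℝ (Fin N) → ℝ}
    (hcrit : IsWeakSolution N V f u) (hg : D12 N g) (hgu : ∀ x, g x = 0 ∨ g x = u x)
    (hgrad : ∀ x, gradient g x = 0 ∨ gradient g x = gradient u x) :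
    normVsq N V g = ∫ x, f (g x) * g x := by
  calc normVsq N V g
      = ∫ x, ((inner ℝ (gradient u x) (gradient g x) : ℝ) + V x * u x * g x) := by
        unfold normVsq
        congr 1 with x
        rcases hgrad x with h' | h' <;> rcases hgu x with h | h <;>
          simp only [h, h', inner_zero_right, norm_zero, real_inner_self_eq_norm_sq] <;> ring
    _ = ∫ x, f (u x) * g x := hcrit g hg
    _ = ∫ x, f (g x) * g x := by
        congr 1 with x
        rcases hgu x with h | h <;> simp [h]

theorem IsWeakSolution.sup_zero_mem_NehariV (hcrit : IsWeakSolution N V f u) (hu : D12 N u)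
    (hpos : ¬ u ⊔ 0 =ᵐ[volume] 0) : u ⊔ 0 ∈ NehariV N V f :=
  ⟨hu.sup_zero, hpos, hcrit.normVsq_eq_integral hu.sup_zero
    (fun x => (max_choice (u x) 0).symm) (gradient_sup_zero u)⟩

theorem IsWeakSolution.inf_zero_mem_NehariV (hcrit : IsWeakSolution N V f u) (hu : D12 N u)
    (hneg : ¬ u ⊓ 0 =ᵐ[volume] 0) : u ⊓ 0 ∈ NehariV N V f :=
  ⟨hu.inf_zero, hneg, hcrit.normVsq_eq_integral hu.inf_zero
    (fun x => (min_choice (u x) 0).symm) (gradient_inf_zero u)⟩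

theorem IsWeakSolution.energyIV_eq_add {F : ℝ → ℝ} {A : ℝ} (hcrit : IsWeakSolution N V f u)
    (hN : 3 ≤ N) (hu : D12 N u) (hf : Continuous f) (hF : Continuous F)
    (hfgrow : ∀ s, |f s * s| ≤ A * |s| ^ twoStar N)
    (hFgrow : ∀ s, |F s| ≤ A * |s| ^ twoStar N) :
    energyIV N V F u = energyIV N V F (u ⊔ 0) + energyIV N V F (u ⊓ 0) := by
  have hp : 0 < twoStar N := one_pos.trans (one_lt_twoStar hN)
  have hfu := hu.1.integral_comp_eq_integral_sup_zero_add_integral_inf_zero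
    (φ := fun s => f s * s) (hf.mul continuous_id) hp hfgrow
  have hFu := hu.1.integral_comp_eq_integral_sup_zero_add_integral_inf_zero hF hp hFgrow
  simp only [energyIV,
    hcrit.normVsq_eq_integral hu (fun _ => .inr rfl) (fun _ => .inr rfl),
    hcrit.normVsq_eq_integral hu.sup_zero (fun x => (max_choice (u x) 0).symm)
      (gradient_sup_zero u),
    hcrit.normVsq_eq_integral hu.inf_zero (fun x => (min_choice (u x) 0).symm)
      (gradient_inf_zero u), hfu, hFu]
  ring

end Critical

theorem stmt_12_general (N : ℕ) (hN : 3 ≤ N) (V : EuclideanSpace ℝ (Fin N) → ℝ)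
    (f F : ℝ → ℝ) (hf : ContDiff ℝ 1 f)
    (hF : ∀ s, F s = ∫ t in (0:ℝ)..s, f t)
    (A₁ : ℝ) (hA : 0 < A₁) (hgrow : ∀ s : ℝ, |f s| ≤ A₁ * |s| ^ (twoStar N - 1))
    (u : EuclideanSpace ℝ (Fin N) → ℝ) (hu : D12 N u)
    (hcrit : ∀ v : EuclideanSpace ℝ (Fin N) → ℝ, D12 N v →
      (∫ x, ((inner ℝ (gradient u x) (gradient v x) : ℝ) + V x * u x * v x)) =
        ∫ x, f (u x) * v x)
    (cV : ℝ) (hcV : cV = sInf (energyIV N V F '' NehariV N V f)) (hcVpos : 0 < cV)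
    (hIu : energyIV N V F u ∈ Set.Ico cV (2 * cV)) :
    (∀ᵐ x ∂(volume : Measure (EuclideanSpace ℝ (Fin N))), 0 ≤ u x) ∨
      (∀ᵐ x ∂(volume : Measure (EuclideanSpace ℝ (Fin N))), u x ≤ 0) := by
  have hp : 1 < twoStar N := one_lt_twoStar hN
  have hFcont : Continuous F := by
    rw [funext hF]
    exact intervalIntegral.continuous_primitive (fun a b => hf.continuous.intervalIntegrable a b) 0
  have hsplit := IsWeakSolution.energyIV_eq_add hcrit hN hu hf.continuous hFcont
    (abs_mul_self_le_of_abs_le_rpow (by linarith) hgrow)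
    (fun s => hF s ▸ abs_integral_le_of_abs_le_rpow hp.le hA.le hgrow s)
  by_contra hchange
  obtain ⟨hnonneg, hnonpos⟩ := not_or.1 hchange
  have hpos : ¬ u ⊔ 0 =ᵐ[volume] 0 :=
    fun h => hnonpos (h.mono fun x hx => max_eq_right_iff.1 hx)
  have hneg : ¬ u ⊓ 0 =ᵐ[volume] 0 :=
    fun h => hnonneg (h.mono fun x hx => min_eq_right_iff.1 hx)
  have hmin : ∀ w ∈ NehariV N V f, cV ≤ energyIV N V F w := fun w hw =>
    hcV ▸ Real.sInf_le_of_pos (hcV ▸ hcVpos) ⟨w, hw, rfl⟩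
  linarith [hmin _ (IsWeakSolution.sup_zero_mem_NehariV hcrit hu hpos),
    hmin _ (IsWeakSolution.inf_zero_mem_NehariV hcrit hu hneg), hIu.2]

theorem stmt_12 (N : ℕ) (hN : 3 ≤ N) (V : EuclideanSpace ℝ (Fin N) → ℝ)
    (f F : ℝ → ℝ) (hf : ContDiff ℝ 1 f) (hodd : ∀ s, f (-s) = -f s)
    (hF : ∀ s, F s = ∫ t in (0:ℝ)..s, f t)
    (A₁ : ℝ) (hA : 0 < A₁) (hgrow : ∀ s : ℝ, |f s| ≤ A₁ * |s| ^ (twoStar N - 1))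
    (u : EuclideanSpace ℝ (Fin N) → ℝ) (hu : D12 N u)
    (hcrit : ∀ v : EuclideanSpace ℝ (Fin N) → ℝ, D12 N v →
      (∫ x, ((inner ℝ (gradient u x) (gradient v x) : ℝ) + V x * u x * v x)) =
        ∫ x, f (u x) * v x)
    (cV : ℝ) (hcV : cV = sInf (energyIV N V F '' NehariV N V f)) (hcVpos : 0 < cV)
    (hIu : energyIV N V F u ∈ Set.Ico cV (2 * cV)) :
    (∀ᵐ x ∂(volume : Measure (EuclideanSpace ℝ (Fin N))), 0 ≤ u x) ∨
      (∀ᵐ x ∂(volume : Measure (EuclideanSpace ℝ (Fin N))), u x ≤ 0) :=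
  stmt_12_general N hN V f F hf hF A₁ hA hgrow u hu hcrit cV hcV hcVpos hIu
end
end

section
/- Let $N\geq 3$, $\kappa>\max\{2,N-2\}$, $A_0,A_3>0$. Suppose $V:\mathbb{R}^N\to\mathbb{R}$ satisfies $V(x)\leq A_0(1+|x|)^{-\kappa}$ and $\omega:\mathbb{R}^N\to(0,\infty)$ satisfies $\omega(x)\leq A_3(1+|x|)^{-(N-2)}$. Fix $y_0,y\in\mathbb{R}^N\setminus\{0\}$ with $|y-y_0|=2$, $|y_0|=1$. Then there exist $\tau>N-2$ and $C>0$ such that $\int_{\mathbb{R}^N}V^+(x)\big(\omega(x-Ry_0)+\omega(x-Ry)\big)^2 dx\leq C R^{-\tau}$ for all $R\geq 1$, where $V^+:=\max\{V,0\}$. -/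
open MeasureTheory Real

noncomputable section

lemma sq_add_le' (s t : ℝ) : (s + t) ^ 2 ≤ 2 * s ^ 2 + 2 * t ^ 2 := by
  nlinarith [sq_nonneg (s - t)]

lemma aux1 {p q w τ a b R : ℝ} (hw0 : 0 ≤ w) (hτ0 : 0 ≤ τ) (hτ : τ ≤ q - w)
    (ha : 1 ≤ a) (hab : a ≤ b) (hR : 1 ≤ R) (hRb : R ≤ 2 * b) :
    a ^ (-p) * b ^ (-q) ≤ 2 ^ (q - w) * R ^ (-τ) * a ^ (-(p + w)) := by
  have hapos : (0:ℝ) < a := lt_of_lt_of_le one_pos ha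
  have hbpos : (0:ℝ) < b := lt_of_lt_of_le hapos hab
  have hRpos : (0:ℝ) < R := lt_of_lt_of_le one_pos hR
  have hR2 : R / 2 ≤ b := by linarith
  have hR2pos : (0:ℝ) < R / 2 := by linarith
  have h1 : b ^ (-q) = b ^ (-w) * b ^ (-(q - w)) := by
    rw [← Real.rpow_add hbpos]; ring_nf
  have h2 : b ^ (-w) ≤ a ^ (-w) :=
    Real.rpow_le_rpow_of_nonpos hapos hab (by linarith)
  have h3 : b ^ (-(q - w)) ≤ (R / 2) ^ (-(q - w)) :=
    Real.rpow_le_rpow_of_nonpos hR2pos hR2 (by linarith)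
  have h4 : (R / 2) ^ (-(q - w)) = 2 ^ (q - w) * R ^ (-(q - w)) := by
    rw [Real.div_rpow hRpos.le (by norm_num), Real.rpow_neg hRpos.le,
      Real.rpow_neg (by norm_num : (0:ℝ) ≤ 2), div_eq_mul_inv, inv_inv]
    ring
  have h5 : R ^ (-(q - w)) ≤ R ^ (-τ) :=
    Real.rpow_le_rpow_of_exponent_le hR (by linarith)
  have h6 : a ^ (-(p + w)) = a ^ (-p) * a ^ (-w) := by
    rw [← Real.rpow_add hapos]; ring_nf
  calc a ^ (-p) * b ^ (-q) = a ^ (-p) * (b ^ (-w) * b ^ (-(q - w))) := by rw [h1]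
    _ ≤ a ^ (-p) * (a ^ (-w) * ((R / 2) ^ (-(q - w)))) := by
        apply mul_le_mul_of_nonneg_left _ (Real.rpow_nonneg hapos.le _)
        exact mul_le_mul h2 h3 (Real.rpow_nonneg hbpos.le _) (Real.rpow_nonneg hapos.le _)
    _ = (R / 2) ^ (-(q - w)) * a ^ (-(p + w)) := by rw [h6]; ring
    _ = 2 ^ (q - w) * R ^ (-(q - w)) * a ^ (-(p + w)) := by rw [h4]
    _ ≤ 2 ^ (q - w) * R ^ (-τ) * a ^ (-(p + w)) := by
        apply mul_le_mul_of_nonneg_right _ (Real.rpow_nonneg hapos.le _)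
        exact mul_le_mul_of_nonneg_left h5 (Real.rpow_nonneg (by norm_num) _)

lemma aux2 {κ β u w τ a b R : ℝ} (hu0 : 0 ≤ u) (hw0 : 0 ≤ w)
    (hκ0 : 0 ≤ κ) (hβ0 : 0 ≤ β)
    (hτ0 : 0 ≤ τ) (hτκ : τ ≤ κ - u) (hτβ : τ ≤ β - w)
    (ha : 1 ≤ a) (hb : 1 ≤ b) (hR : 1 ≤ R) (hab : R ≤ a + b) :
    a ^ (-κ) * b ^ (-β) ≤ 2 ^ (κ + β) * R ^ (-τ) * (a ^ (-(κ + w)) + b ^ (-(β + u))) := by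
  have hapos : (0:ℝ) < a := lt_of_lt_of_le one_pos ha
  have hbpos : (0:ℝ) < b := lt_of_lt_of_le one_pos hb
  have hRpos : (0:ℝ) < R := lt_of_lt_of_le one_pos hR
  have hconst : ∀ s : ℝ, s ≤ κ + β → (2:ℝ) ^ s ≤ 2 ^ (κ + β) := fun s hs =>
    Real.rpow_le_rpow_of_exponent_le one_le_two hs
  rcases le_total a b with hab' | hab'
  · have h := aux1 (p := κ) hw0 hτ0 hτβ ha hab' hR (by linarith)
    calc a ^ (-κ) * b ^ (-β) ≤ 2 ^ (β - w) * R ^ (-τ) * a ^ (-(κ + w)) := h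
      _ ≤ 2 ^ (κ + β) * R ^ (-τ) * a ^ (-(κ + w)) := by
          apply mul_le_mul_of_nonneg_right _ (Real.rpow_nonneg hapos.le _)
          exact mul_le_mul_of_nonneg_right (hconst _ (by linarith)) (Real.rpow_nonneg hRpos.le _)
      _ ≤ 2 ^ (κ + β) * R ^ (-τ) * (a ^ (-(κ + w)) + b ^ (-(β + u))) := by
          apply mul_le_mul_of_nonneg_left _ (by positivity)
          linarith [Real.rpow_nonneg hbpos.le (-(β + u))]
  · have h := aux1 (p := β) hu0 hτ0 hτκ hb hab' hR (by linarith)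
    calc a ^ (-κ) * b ^ (-β) = b ^ (-β) * a ^ (-κ) := by ring
      _ ≤ 2 ^ (κ - u) * R ^ (-τ) * b ^ (-(β + u)) := h
      _ ≤ 2 ^ (κ + β) * R ^ (-τ) * b ^ (-(β + u)) := by
          apply mul_le_mul_of_nonneg_right _ (Real.rpow_nonneg hbpos.le _)
          exact mul_le_mul_of_nonneg_right (hconst _ (by linarith)) (Real.rpow_nonneg hRpos.le _)
      _ ≤ 2 ^ (κ + β) * R ^ (-τ) * (a ^ (-(κ + w)) + b ^ (-(β + u))) := by
          apply mul_le_mul_of_nonneg_left _ (by positivity)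
          linarith [Real.rpow_nonneg hapos.le (-(κ + w))]

set_option maxHeartbeats 2000000 in
theorem stmt_16 (N : ℕ) (hN : 3 ≤ N) (κ A₀ A₃ : ℝ)
    (hκ : max 2 ((N : ℝ) - 2) < κ) (hA₀ : 0 < A₀) (hA₃ : 0 < A₃)
    (V : EuclideanSpace ℝ (Fin N) → ℝ)
    (hV : ∀ x : EuclideanSpace ℝ (Fin N), V x ≤ A₀ * (1 + ‖x‖) ^ (-κ))
    (ω : EuclideanSpace ℝ (Fin N) → ℝ)
    (hω : ∀ x : EuclideanSpace ℝ (Fin N),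
      0 < ω x ∧ ω x ≤ A₃ * (1 + ‖x‖) ^ (-((N : ℝ) - 2)))
    (y₀ y : EuclideanSpace ℝ (Fin N)) (hy₀ : ‖y₀‖ = 1) (hy : y ≠ 0)
    (hyy : ‖y - y₀‖ = 2) :
    ∃ τ > (N : ℝ) - 2, ∃ C > (0:ℝ), ∀ R : ℝ, 1 ≤ R →
      (∫ x : EuclideanSpace ℝ (Fin N),
          max (V x) 0 * (ω (x - R • y₀) + ω (x - R • y)) ^ 2) ≤ C * R ^ (-τ) := by
  have hN3 : (3:ℝ) ≤ (N:ℝ) := by exact_mod_cast hN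
  have hκ2 : (2:ℝ) < κ := lt_of_le_of_lt (le_max_left _ _) hκ
  have hκN2 : (N:ℝ) - 2 < κ := lt_of_le_of_lt (le_max_right _ _) hκ

  set β : ℝ := 2 * ((N:ℝ) - 2) with hβdef
  have hβ0 : (0:ℝ) < β := by simp only [hβdef]; linarith
  set u : ℝ := (max 0 ((N:ℝ) - β) + (κ - ((N:ℝ) - 2))) / 2 with hudef
  set w : ℝ := (max 0 ((N:ℝ) - κ) + ((N:ℝ) - 2)) / 2 with hwdef
  have hmu : max 0 ((N:ℝ) - β) < κ - ((N:ℝ) - 2) := by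
    apply max_lt (by linarith)
    simp only [hβdef]; linarith
  have hmw : max 0 ((N:ℝ) - κ) < (N:ℝ) - 2 := max_lt (by linarith) (by linarith)
  have hu0 : 0 < u := by
    have := le_max_left (0:ℝ) ((N:ℝ) - β); simp only [hudef]; linarith
  have hw0 : 0 < w := by
    have := le_max_left (0:ℝ) ((N:ℝ) - κ); simp only [hwdef]; linarith
  have huκ : u < κ - ((N:ℝ) - 2) := by simp only [hudef]; linarith
  have hwN : w < (N:ℝ) - 2 := by simp only [hwdef]; linarith
  have hθ₂ : (N:ℝ) < β + u := by
    have := le_max_right (0:ℝ) ((N:ℝ) - β); simp only [hudef]; linarith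
  have hθ₁ : (N:ℝ) < κ + w := by
    have := le_max_right (0:ℝ) ((N:ℝ) - κ); simp only [hwdef]; linarith
  set τ : ℝ := min (κ - u) (β - w) with hτdef
  have hτN : (N:ℝ) - 2 < τ := by
    apply lt_min (by linarith)
    simp only [hβdef]; linarith
  have hτ0 : (0:ℝ) ≤ τ := by linarith
  have hτκ : τ ≤ κ - u := min_le_left _ _
  have hτβ : τ ≤ β - w := min_le_right _ _
  -- integrability of the comparison functions
  have hfr : ((Module.finrank ℝ (EuclideanSpace ℝ (Fin N)) : ℝ)) = (N:ℝ) := by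
    simp [finrank_euclideanSpace_fin]
  have hint₁ : Integrable (fun x : (EuclideanSpace ℝ (Fin N)) => (1 + ‖x‖) ^ (-(κ + w))) :=
    integrable_one_add_norm (by rw [hfr]; exact hθ₁)
  have hint₂ : Integrable (fun x : (EuclideanSpace ℝ (Fin N)) => (1 + ‖x‖) ^ (-(β + u))) :=
    integrable_one_add_norm (by rw [hfr]; exact hθ₂)
  set I₁ : ℝ := ∫ x : (EuclideanSpace ℝ (Fin N)), (1 + ‖x‖) ^ (-(κ + w)) with hI₁
  set I₂ : ℝ := ∫ x : (EuclideanSpace ℝ (Fin N)), (1 + ‖x‖) ^ (-(β + u)) with hI₂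
  have hI₁0 : 0 ≤ I₁ := integral_nonneg fun x => Real.rpow_nonneg (by positivity) _
  have hI₂0 : 0 ≤ I₂ := integral_nonneg fun x => Real.rpow_nonneg (by positivity) _
  set K : ℝ := 2 * A₀ * A₃ ^ 2 * 2 ^ (κ + β) with hK
  have hK0 : 0 < K := by positivity
  have hCpos : (0:ℝ) < K * (2 * I₁ + 2 * I₂) + 1 := by
    have h1 : (0:ℝ) ≤ K * (2 * I₁ + 2 * I₂) := mul_nonneg hK0.le (by linarith)
    linarith
  refine ⟨τ, hτN, K * (2 * I₁ + 2 * I₂) + 1, hCpos, fun R hR => ?_⟩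
  have hRpos : (0:ℝ) < R := lt_of_lt_of_le one_pos hR
  have hRτ : (0:ℝ) < R ^ (-τ) := Real.rpow_pos_of_pos hRpos _
  set g : (EuclideanSpace ℝ (Fin N)) → ℝ := fun x => max (V x) 0 * (ω (x - R • y₀) + ω (x - R • y)) ^ 2 with hg
  by_cases hgi : Integrable g
  · -- pointwise bound
    have hy1 : (1:ℝ) ≤ ‖y‖ := by
      have := norm_sub_le y y₀
      rw [hyy, hy₀] at this; linarith
    set h : (EuclideanSpace ℝ (Fin N)) → ℝ := fun x => K * R ^ (-τ) *
      (2 * (1 + ‖x‖) ^ (-(κ + w)) + (1 + ‖x - R • y₀‖) ^ (-(β + u))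
        + (1 + ‖x - R • y‖) ^ (-(β + u))) with hh
    have hpt : ∀ x : (EuclideanSpace ℝ (Fin N)), g x ≤ h x := by
      intro x
      set a : ℝ := 1 + ‖x‖ with hadef
      set b₀ : ℝ := 1 + ‖x - R • y₀‖ with hb₀def
      set b₁ : ℝ := 1 + ‖x - R • y‖ with hb₁def
      have ha1 : (1:ℝ) ≤ a := by rw [hadef]; exact le_add_of_nonneg_right (norm_nonneg _)
      have hb₀1 : (1:ℝ) ≤ b₀ := by rw [hb₀def]; exact le_add_of_nonneg_right (norm_nonneg _)
      have hb₁1 : (1:ℝ) ≤ b₁ := by rw [hb₁def]; exact le_add_of_nonneg_right (norm_nonneg _)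
      have key : ∀ z : (EuclideanSpace ℝ (Fin N)), (1:ℝ) ≤ ‖z‖ → R ≤ (1 + ‖x‖) + (1 + ‖x - R • z‖) := by
        intro z hz
        have h1 : ‖(R • z : (EuclideanSpace ℝ (Fin N)))‖ = R * ‖z‖ := by
          rw [norm_smul, Real.norm_eq_abs, abs_of_pos hRpos]
        have h2 : ‖(R • z : (EuclideanSpace ℝ (Fin N)))‖ ≤ ‖x‖ + ‖x - R • z‖ := by
          calc ‖(R • z : (EuclideanSpace ℝ (Fin N)))‖ = ‖x - (x - R • z)‖ := by congr 1; abel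
            _ ≤ ‖x‖ + ‖x - R • z‖ := norm_sub_le _ _
        nlinarith
      have hab₀ : R ≤ a + b₀ := by
        have := key y₀ (by rw [hy₀])
        simp only [hadef, hb₀def]; linarith
      have hab₁ : R ≤ a + b₁ := by
        have := key y hy1
        simp only [hadef, hb₁def]; linarith
      have ha0 : (0:ℝ) < a := lt_of_lt_of_le one_pos ha1
      have hb₀0 : (0:ℝ) < b₀ := lt_of_lt_of_le one_pos hb₀1
      have hb₁0 : (0:ℝ) < b₁ := lt_of_lt_of_le one_pos hb₁1
      have hV' : max (V x) 0 ≤ A₀ * a ^ (-κ) := max_le (hV x) (by positivity)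
      have hsq : (ω (x - R • y₀) + ω (x - R • y)) ^ 2
          ≤ 2 * ω (x - R • y₀) ^ 2 + 2 * ω (x - R • y) ^ 2 :=
        sq_add_le' _ _
      have hsqb : ∀ c : ℝ, 0 < c → ∀ t : ℝ, 0 < t → t ≤ A₃ * c ^ (-((N:ℝ) - 2)) →
          t ^ 2 ≤ A₃ ^ 2 * c ^ (-β) := by
        intro c hc t ht hle
        have h1 : t ^ 2 ≤ (A₃ * c ^ (-((N:ℝ) - 2))) ^ 2 := pow_le_pow_left₀ ht.le hle 2
        have h2 : (A₃ * c ^ (-((N:ℝ) - 2))) ^ 2 = A₃ ^ 2 * c ^ (-β) := by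
          rw [mul_pow, sq (c ^ (-((N:ℝ) - 2))), ← Real.rpow_add hc]
          congr 1
          simp only [hβdef]; ring
        linarith
      have hω₀ : ω (x - R • y₀) ^ 2 ≤ A₃ ^ 2 * b₀ ^ (-β) :=
        hsqb b₀ hb₀0 _ (hω _).1 (hω _).2
      have hω₁ : ω (x - R • y) ^ 2 ≤ A₃ ^ 2 * b₁ ^ (-β) :=
        hsqb b₁ hb₁0 _ (hω _).1 (hω _).2
      have h₀ := aux2 hu0.le hw0.le (by linarith) hβ0.le hτ0 hτκ hτβ ha1 hb₀1 hR hab₀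
      have h₁ := aux2 hu0.le hw0.le (by linarith) hβ0.le hτ0 hτκ hτβ ha1 hb₁1 hR hab₁
      calc g x ≤ (A₀ * a ^ (-κ)) * (2 * ω (x - R • y₀) ^ 2 + 2 * ω (x - R • y) ^ 2) := by
            apply mul_le_mul hV' hsq (sq_nonneg _)
            positivity
        _ ≤ (A₀ * a ^ (-κ)) * (2 * (A₃ ^ 2 * b₀ ^ (-β)) + 2 * (A₃ ^ 2 * b₁ ^ (-β))) := by
            apply mul_le_mul_of_nonneg_left (by linarith) (by positivity)
        _ = 2 * A₀ * A₃ ^ 2 * (a ^ (-κ) * b₀ ^ (-β))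
            + 2 * A₀ * A₃ ^ 2 * (a ^ (-κ) * b₁ ^ (-β)) := by ring
        _ ≤ 2 * A₀ * A₃ ^ 2 * (2 ^ (κ + β) * R ^ (-τ) * (a ^ (-(κ + w)) + b₀ ^ (-(β + u))))
            + 2 * A₀ * A₃ ^ 2 * (2 ^ (κ + β) * R ^ (-τ) * (a ^ (-(κ + w)) + b₁ ^ (-(β + u)))) := by
            have c0 : (0:ℝ) ≤ 2 * A₀ * A₃ ^ 2 := by positivity
            exact add_le_add (mul_le_mul_of_nonneg_left h₀ c0) (mul_le_mul_of_nonneg_left h₁ c0)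
        _ = h x := by simp only [hh, hK]; ring
    have hhint : Integrable h := by
      apply Integrable.const_mul
      exact ((hint₁.const_mul 2).add (hint₂.comp_sub_right (R • y₀))).add
        (hint₂.comp_sub_right (R • y))
    have hle : (∫ x : (EuclideanSpace ℝ (Fin N)), g x) ≤ ∫ x : (EuclideanSpace ℝ (Fin N)), h x := integral_mono hgi hhint hpt
    have hval : (∫ x : (EuclideanSpace ℝ (Fin N)), h x) = K * R ^ (-τ) * (2 * I₁ + I₂ + I₂) := by
      simp only [hh]
      rw [integral_const_mul]
      congr 1
      have hA : Integrable (fun x : EuclideanSpace ℝ (Fin N) =>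
          2 * (1 + ‖x‖) ^ (-(κ + w))) := hint₁.const_mul 2
      have hB : Integrable (fun x : EuclideanSpace ℝ (Fin N) =>
          (1 + ‖x - R • y₀‖) ^ (-(β + u))) := hint₂.comp_sub_right (R • y₀)
      have hC : Integrable (fun x : EuclideanSpace ℝ (Fin N) =>
          (1 + ‖x - R • y‖) ^ (-(β + u))) := hint₂.comp_sub_right (R • y)
      have hAB : Integrable (fun x : EuclideanSpace ℝ (Fin N) =>
          2 * (1 + ‖x‖) ^ (-(κ + w)) + (1 + ‖x - R • y₀‖) ^ (-(β + u))) := hA.add hB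
      rw [integral_add hAB hC,
        integral_add hA hB,
        integral_const_mul,
        integral_sub_right_eq_self (fun x : (EuclideanSpace ℝ (Fin N)) => (1 + ‖x‖) ^ (-(β + u))) (R • y₀),
        integral_sub_right_eq_self (fun x : (EuclideanSpace ℝ (Fin N)) => (1 + ‖x‖) ^ (-(β + u))) (R • y)]
    have : (∫ x : (EuclideanSpace ℝ (Fin N)), g x) ≤ K * R ^ (-τ) * (2 * I₁ + I₂ + I₂) := hval ▸ hle
    calc (∫ x : (EuclideanSpace ℝ (Fin N)), g x) ≤ K * R ^ (-τ) * (2 * I₁ + I₂ + I₂) := this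
      _ = K * (2 * I₁ + 2 * I₂) * R ^ (-τ) := by ring
      _ ≤ (K * (2 * I₁ + 2 * I₂) + 1) * R ^ (-τ) :=
          mul_le_mul_of_nonneg_right (by linarith) hRτ.le
  · rw [integral_undef hgi]
    exact mul_nonneg hCpos.le hRτ.le
end
end
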